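/- Suppose a nonnegative differentiable function E(t) satisfies, for all t ≥ 0: E'(t) + (3/(1+t)) E(t) ≤ (3/(1+t)) [ C(1+t)^{-1} + C(1+t)^{-1} ∫₀ᵗ E(s)² ds ] and additionally E(t) ≤ C₀(1+t)^{-2/3}. Then there exists C' > 0 with E(t) ≤ C' (1+t)^{-1} for all t ≥ 0. -/

import Mathlib

/-!
The preliminary decay `E ≤ C₀ (1 + t) ^ (-2/3)` makes `E ^ 2` integrable on `[0, ∞)` with
`∫ E ^ 2 ≤ 3 C₀ ^ 2`, so the right-hand side is at most `K / (1 + t) ^ 2` with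
`K = 3 C (1 + 3 C₀ ^ 2)`. With the integrating factor `(1 + t) ^ 3` this gives
`((1 + t) ^ 3 E - (K / 2) (1 + t) ^ 2)' ≤ 0`, hence
`(1 + t) ^ 3 E t ≤ E 0 + (K / 2) (1 + t) ^ 2`, i.e. `E t ≤ (E 0 + K / 2) / (1 + t)`.
-/

open MeasureTheory Real Set

lemma integral_one_add_rpow_neg_le {p t : ℝ} (hp : 1 < p) (ht : 0 ≤ t) :
    ∫ s in (0 : ℝ)..t, (1 + s) ^ (-p) ≤ (p - 1)⁻¹ := by
  have hzero : (0 : ℝ) ∉ uIcc (1 + 0) (1 + t) := by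
    rw [uIcc_of_le (by linarith)]
    exact fun h => by linarith [h.1]
  rw [intervalIntegral.integral_comp_add_left (fun x => x ^ (-p)) 1,
    integral_rpow (Or.inr ⟨by linarith, hzero⟩), add_zero, one_rpow]
  have htail : 0 ≤ (1 + t) ^ (-p + 1) := rpow_nonneg (by linarith) _
  rw [div_le_iff_of_neg (by linarith)]
  have : (p - 1)⁻¹ * (-p + 1) = -1 := by
    rw [show -p + 1 = -(p - 1) by ring, mul_neg, inv_mul_cancel₀ (by linarith)]
  linarith

lemma integral_sq_le_of_le_mul_rpow {f : ℝ → ℝ} {A a t : ℝ} (ha : 1 / 2 < a) (ht : 0 ≤ t)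
    (hf : ContinuousOn f (Icc 0 t)) (hf₀ : ∀ s ∈ Icc 0 t, 0 ≤ f s)
    (hfA : ∀ s ∈ Icc 0 t, f s ≤ A * (1 + s) ^ (-a)) :
    ∫ s in (0 : ℝ)..t, f s ^ 2 ≤ A ^ 2 / (2 * a - 1) := by
  have hcont : ContinuousOn (fun s : ℝ => (1 + s) ^ (-(2 * a))) (Icc 0 t) :=
    ContinuousOn.rpow_const (by fun_prop) fun s hs => Or.inl (by linarith [hs.1])
  calc ∫ s in (0 : ℝ)..t, f s ^ 2
      ≤ ∫ s in (0 : ℝ)..t, A ^ 2 * (1 + s) ^ (-(2 * a)) := by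
        refine intervalIntegral.integral_mono_on ht ((hf.pow 2).intervalIntegrable_of_Icc ht)
          ((continuousOn_const.mul hcont).intervalIntegrable_of_Icc ht) fun s hs => ?_
        calc f s ^ 2 ≤ (A * (1 + s) ^ (-a)) ^ 2 := pow_le_pow_left₀ (hf₀ s hs) (hfA s hs) 2
          _ = A ^ 2 * (1 + s) ^ (-(2 * a)) := by
            rw [mul_pow, ← rpow_natCast ((1 + s) ^ (-a)), ← rpow_mul (by linarith [hs.1])]
            ring_nf
    _ = A ^ 2 * ∫ s in (0 : ℝ)..t, (1 + s) ^ (-(2 * a)) :=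
        intervalIntegral.integral_const_mul _ _
    _ ≤ A ^ 2 * (2 * a - 1)⁻¹ := by
        gcongr
        exact integral_one_add_rpow_neg_le (by linarith) ht
    _ = A ^ 2 / (2 * a - 1) := (div_eq_mul_inv _ _).symm

lemma hasDerivAt_one_add_rpow {t : ℝ} (ht : 1 + t ≠ 0) (b : ℝ) :
    HasDerivAt (fun u : ℝ => (1 + u) ^ b) (b * (1 + t) ^ (b - 1)) t :=
  (hasDerivAt_rpow_const (Or.inl ht)).comp_const_add 1 t

section DifferentialInequality

variable {E E' : ℝ → ℝ} {a K : ℝ}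

/-- Multiplying by the integrating factor `(1 + t) ^ a` turns the inequality into
`((1 + t) ^ a * E t)' ≤ K * (1 + t) ^ (a - 2)`. -/
lemma antitoneOn_one_add_rpow_mul_sub (ha : 1 < a)
    (hderiv : ∀ t, 0 ≤ t → HasDerivAt E (E' t) t)
    (hineq : ∀ t, 0 ≤ t → E' t + a / (1 + t) * E t ≤ K / (1 + t) ^ 2) :
    AntitoneOn (fun t => (1 + t) ^ a * E t - K / (a - 1) * (1 + t) ^ (a - 1)) (Ici 0) := by
  have hderivΦ : ∀ t, 0 ≤ t →
      HasDerivAt (fun t => (1 + t) ^ a * E t - K / (a - 1) * (1 + t) ^ (a - 1))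
      (a * (1 + t) ^ (a - 1) * E t + (1 + t) ^ a * E' t
        - K / (a - 1) * ((a - 1) * (1 + t) ^ (a - 1 - 1))) t := fun t ht =>
    have h1t : 1 + t ≠ 0 := by linarith
    ((hasDerivAt_one_add_rpow h1t a).mul (hderiv t ht)).sub
      ((hasDerivAt_one_add_rpow h1t (a - 1)).const_mul _)
  refine antitoneOn_of_hasDerivWithinAt_nonpos (convex_Ici 0)
    (fun t ht => (hderivΦ t ht).continuousAt.continuousWithinAt)
    (fun t ht => (hderivΦ t (interior_subset ht)).hasDerivWithinAt) fun t ht => ?_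
  rw [interior_Ici] at ht
  have h1t : (1 + t) ≠ 0 := by linarith [mem_Ioi.mp ht]
  have hfactor : a * (1 + t) ^ (a - 1) * E t + (1 + t) ^ a * E' t
      - K / (a - 1) * ((a - 1) * (1 + t) ^ (a - 1 - 1))
      = (1 + t) ^ a * (E' t + a / (1 + t) * E t - K / (1 + t) ^ 2) := by
    simp only [rpow_sub_one h1t]
    field_simp [(by linarith : a - 1 ≠ 0)]
    ring
  rw [hfactor]
  exact mul_nonpos_of_nonneg_of_nonpos (rpow_nonneg (by linarith [mem_Ioi.mp ht]) _)
    (by linarith [hineq t ht.le])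

lemma le_mul_one_add_rpow_neg_one_of_differential_ineq (ha : 1 < a)
    (hderiv : ∀ t, 0 ≤ t → HasDerivAt E (E' t) t)
    (hineq : ∀ t, 0 ≤ t → E' t + a / (1 + t) * E t ≤ K / (1 + t) ^ 2)
    (hE₀ : 0 ≤ E 0) (hK : 0 ≤ K) {t : ℝ} (ht : 0 ≤ t) :
    E t ≤ (E 0 + K / (a - 1)) * (1 + t) ^ (-1 : ℝ) := by
  have h1t : 0 < 1 + t := by linarith
  have hmono := antitoneOn_one_add_rpow_mul_sub ha hderiv hineq self_mem_Ici ht ht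
  simp only [add_zero, one_rpow, one_mul] at hmono
  have hgrowth : 1 ≤ (1 + t) ^ (a - 1) := one_le_rpow (by linarith) (by linarith)
  have hbound : (1 + t) ^ a * E t ≤ (E 0 + K / (a - 1)) * (1 + t) ^ (a - 1) := by
    have : 0 ≤ K / (a - 1) := div_nonneg hK (by linarith)
    nlinarith [mul_le_mul_of_nonneg_left hgrowth hE₀]
  have hsplit : (1 + t) ^ (a - 1) = (1 + t) ^ a * (1 + t) ^ (-1 : ℝ) := by
    rw [← rpow_add h1t, sub_eq_add_neg]
  rw [hsplit, mul_left_comm] at hbound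
  exact le_of_mul_le_mul_left hbound (rpow_pos_of_pos h1t a)

end DifferentialInequality

theorem bootstrap_2d_general (C C₀ : ℝ) (hC : 0 < C)
    (E E' : ℝ → ℝ) (hEn : ∀ t, 0 ≤ t → 0 ≤ E t)
    (hderiv : ∀ t, 0 ≤ t → HasDerivAt E (E' t) t)
    (hineq : ∀ t, 0 ≤ t →
      E' t + (3 / (1 + t)) * E t ≤
        (3 / (1 + t)) * (C * (1 + t) ^ (-1 : ℝ) +
          C * (1 + t) ^ (-1 : ℝ) * ∫ s in (0:ℝ)..t, (E s) ^ 2))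
    (hprelim : ∀ t, 0 ≤ t → E t ≤ C₀ * (1 + t) ^ (-(2:ℝ)/3)) :
    ∃ C' : ℝ, 0 < C' ∧ ∀ t, 0 ≤ t → E t ≤ C' * (1 + t) ^ (-1 : ℝ) := by
  set K := 3 * C * (1 + 3 * C₀ ^ 2)
  have hEcont : ContinuousOn E (Ici 0) := fun s hs =>
    (hderiv s hs).continuousAt.continuousWithinAt
  have hintegral : ∀ t, 0 ≤ t → ∫ s in (0:ℝ)..t, E s ^ 2 ≤ 3 * C₀ ^ 2 := by
    intro t ht
    refine (integral_sq_le_of_le_mul_rpow (a := 2 / 3) (by norm_num) ht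
      (hEcont.mono Icc_subset_Ici_self) (fun s hs => hEn s hs.1)
      (fun s hs => by simpa only [neg_div] using hprelim s hs.1)).trans_eq ?_
    norm_num
    ring
  have hforcing : ∀ t, 0 ≤ t → E' t + (3 : ℝ) / (1 + t) * E t ≤ K / (1 + t) ^ 2 := by
    intro t ht
    have h1t : 0 < 1 + t := by linarith
    calc _ ≤ _ := hineq t ht
      _ ≤ 3 / (1 + t) * (C * (1 + t)⁻¹ + C * (1 + t)⁻¹ * (3 * C₀ ^ 2)) := by
        rw [rpow_neg_one]
        gcongr
        exact hintegral t ht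
      _ = K / (1 + t) ^ 2 := by simp only [K]; field_simp
  have hE₀ := hEn 0 le_rfl
  exact ⟨E 0 + K / (3 - 1), by positivity, fun t ht =>
    le_mul_one_add_rpow_neg_one_of_differential_ineq (by norm_num) hderiv hforcing hE₀
      (by positivity) ht⟩

/-- 2D bootstrap step: if `E' + (3/(1+t))E ≤ (3/(1+t))[C(1+t)^{-1} + C(1+t)^{-1}∫₀ᵗ E²]`
and `E(t) ≤ C₀(1+t)^{-2/3}`, then `E(t) ≤ C'(1+t)^{-1}`. -/
theorem bootstrap_2d (C C₀ : ℝ) (hC : 0 < C) (hC₀ : 0 < C₀)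
    (E E' : ℝ → ℝ) (hEn : ∀ t, 0 ≤ t → 0 ≤ E t)
    (hderiv : ∀ t, 0 ≤ t → HasDerivAt E (E' t) t)
    (hineq : ∀ t, 0 ≤ t →
      E' t + (3 / (1 + t)) * E t ≤
        (3 / (1 + t)) * (C * (1 + t) ^ (-1 : ℝ) +
          C * (1 + t) ^ (-1 : ℝ) * ∫ s in (0:ℝ)..t, (E s) ^ 2))
    (hprelim : ∀ t, 0 ≤ t → E t ≤ C₀ * (1 + t) ^ (-(2:ℝ)/3)) :
    ∃ C' : ℝ, 0 < C' ∧ ∀ t, 0 ≤ t → E t ≤ C' * (1 + t) ^ (-1 : ℝ) :=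
  bootstrap_2d_general C C₀ hC E E' hEn hderiv hineq hprelim
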